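/- For every tree T, every family of paths that separates and covers V(T) has size at least (h₁(T) + h₂*(T))/2, where h₁(T) is the number of leaves and h₂*(T) = h₂(T) − |I|, with h₂(T) the number of degree-2 vertices and I the set of maximal bare paths of T that contain no leaf and have at least two edges. -/

import Mathlib

open SimpleGraph
open scoped Classical

universe u

variable {V : Type u}

/-- A path in a graph `G`, recorded with its two endpoints. -/
def PathIn {V : Type u} (G : SimpleGraph V) : Type u :=
  Σ a b : V, {p : G.Walk a b // p.IsPath}

/-- The path `P` contains the vertex `x`. -/
def PathIn.vmem {G : SimpleGraph V} (x : V) (P : PathIn G) : Prop :=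
  x ∈ P.2.2.1.support

/-- The path `P` contains the edge `e`. -/
def PathIn.emem {G : SimpleGraph V} (e : Sym2 V) (P : PathIn G) : Prop :=
  e ∈ P.2.2.1.edges

/-- The path `P` contains the element `s` (a vertex or an edge). -/
def ElemMem (G : SimpleGraph V) (s : V ⊕ Sym2 V) (P : PathIn G) : Prop :=
  Sum.elim (fun x => PathIn.vmem x P) (fun e => PathIn.emem e P) s

/-- `F` separates the set `S` of elements (vertices and/or edges) of `G`. -/
def Separates (G : SimpleGraph V) (S : Set (V ⊕ Sym2 V)) (F : Set (PathIn G)) : Prop :=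
  ∀ s ∈ S, ∀ t ∈ S, s ≠ t → ∃ P ∈ F,
    (ElemMem G s P ∧ ¬ ElemMem G t P) ∨ (¬ ElemMem G s P ∧ ElemMem G t P)

/-- `F` covers the set `S` of elements of `G`. -/
def Covers (G : SimpleGraph V) (S : Set (V ⊕ Sym2 V)) (F : Set (PathIn G)) : Prop :=
  ∀ s ∈ S, ∃ P ∈ F, ElemMem G s P

/-- `F` separates the edges of `G`. -/
def EdgeSep (G : SimpleGraph V) (F : Set (PathIn G)) : Prop :=
  ∀ e ∈ G.edgeSet, ∀ f ∈ G.edgeSet, e ≠ f → ∃ P ∈ F,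
    (PathIn.emem e P ∧ ¬ PathIn.emem f P) ∨ (¬ PathIn.emem e P ∧ PathIn.emem f P)

/-- `F` covers the edges of `G`. -/
def EdgeCover (G : SimpleGraph V) (F : Set (PathIn G)) : Prop :=
  ∀ e ∈ G.edgeSet, ∃ P ∈ F, PathIn.emem e P

/-- `F` separates the vertices of `G`. -/
def VertexSep (G : SimpleGraph V) (F : Set (PathIn G)) : Prop :=
  ∀ x y : V, x ≠ y → ∃ P ∈ F,
    (PathIn.vmem x P ∧ ¬ PathIn.vmem y P) ∨ (¬ PathIn.vmem x P ∧ PathIn.vmem y P)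

/-- `F` covers the vertices of `G`. -/
def VertexCover (G : SimpleGraph V) (F : Set (PathIn G)) : Prop :=
  ∀ x : V, ∃ P ∈ F, PathIn.vmem x P

/-- The number of leaves of `G`. -/
noncomputable def leafCount (G : SimpleGraph V) [Fintype V] : ℕ :=
  Nat.card {x : V | G.degree x = 1}

/-- The number of degree-two vertices of `G`. -/
noncomputable def deg2Count (G : SimpleGraph V) [Fintype V] : ℕ :=
  Nat.card {x : V | G.degree x = 2}

/-- The set of interior edges: edges with neither endpoint a leaf. -/
noncomputable def interiorEdgeSet (G : SimpleGraph V) [Fintype V] : Set (Sym2 V) :=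
  {e : Sym2 V | e ∈ G.edgeSet ∧ ∀ x ∈ e, G.degree x ≠ 1}

/-- The set of (endpoint pairs of) maximal bare paths of `G` containing no leaf
and having at least two edges. -/
noncomputable def bareNoLeafSet (G : SimpleGraph V) [Fintype V] : Set (Sym2 V) :=
  {p : Sym2 V | ∃ (x y : V) (w : G.Walk x y), p = s(x, y) ∧ w.IsPath ∧ 2 ≤ w.length ∧
    (∀ z ∈ w.support, z ≠ x → z ≠ y → G.degree z = 2) ∧
    G.degree x ≠ 1 ∧ G.degree x ≠ 2 ∧ G.degree y ≠ 1 ∧ G.degree y ≠ 2}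


/-!
A path meets a leaf only at one of its ends, and if it contains exactly one end `c` of an edge
with `deg c ≤ 2`, then `c` is an end of the path. So covering the leaves and separating the two
ends of every *low* edge (both ends of degree at most two) happens at the ends of the paths, where
each end serves at most one leaf or low edge (and a one-vertex path at most two in all). Hence
`leafCount + #low ≤ 2 |F|`.

Conversely, in a tree every degree-two vertex `v` lies on a maximal bare path, oriented towards
its smaller end `a` for an order in which leaves come first. Charge `v` to the edge joining it to
its predecessor on the way to `a`, unless that predecessor is `a` itself and `a` is not a leaf, in
which case the bare path belongs to `I` and `v` is charged to it. The distance to `a` strictly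
decreases along a charged edge, so the charging is injective and `deg2Count ≤ #low + |I|`.
-/

namespace SimpleGraph

variable {G : SimpleGraph V}

namespace Walk

lemma two_le_length_of_mem_support {a b v : V} {p : G.Walk a b} (hv : v ∈ p.support)
    (hva : v ≠ a) (hvb : v ≠ b) : 2 ≤ p.length := by
  obtain ⟨i, rfl, hi⟩ := p.mem_support_iff_exists_getVert.mp hv
  have hi0 : i ≠ 0 := by rintro rfl; exact hva (by simp)
  have hil : i ≠ p.length := by rintro rfl; exact hvb (by simp)
  omega

variable [Fintype V]

lemma IsPath.two_le_card_neighborFinset_filter_mem {a b c : V} {p : G.Walk a b}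
    (hp : p.IsPath) (hc : c ∈ p.support) (hca : c ≠ a) (hcb : c ≠ b) :
    2 ≤ ((G.neighborFinset c).filter (· ∈ p.support)).card := by
  obtain ⟨i, rfl, hi⟩ := p.mem_support_iff_exists_getVert.mp hc
  have hi0 : i ≠ 0 := by rintro rfl; exact hca (by simp)
  have hil : i < p.length := lt_of_le_of_ne hi (by rintro rfl; exact hcb (by simp))
  have hpred : G.Adj (p.getVert i) (p.getVert (i - 1)) := by
    simpa [Nat.sub_add_cancel (Nat.pos_of_ne_zero hi0)] using
      (p.adj_getVert_succ (i := i - 1) (by omega)).symm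
  have hne : p.getVert (i - 1) ≠ p.getVert (i + 1) := fun h => by
    have := hp.getVert_injOn (by rw [Set.mem_ofPred_eq]; omega)
      (by rw [Set.mem_ofPred_eq]; omega) h
    omega
  calc 2 = ({p.getVert (i - 1), p.getVert (i + 1)} : Finset V).card :=
        (Finset.card_pair hne).symm
    _ ≤ _ := Finset.card_le_card fun u hu => by
      rcases Finset.mem_insert.mp hu with rfl | hu
      · simp [hpred, p.getVert_mem_support]
      · rw [Finset.mem_singleton.mp hu]
        simp [p.adj_getVert_succ hil, p.getVert_mem_support]

lemma IsPath.mem_support_of_adj_of_degree_le_two {a b c d : V} {p : G.Walk a b}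
    (hp : p.IsPath) (hc : c ∈ p.support) (hca : c ≠ a) (hcb : c ≠ b) (hdeg : G.degree c ≤ 2)
    (hcd : G.Adj c d) : d ∈ p.support := by
  by_contra hd
  have hsub : (G.neighborFinset c).filter (· ∈ p.support) ⊆ (G.neighborFinset c).erase d :=
    fun u hu => Finset.mem_erase.mpr
      ⟨fun h => hd (h ▸ (Finset.mem_filter.mp hu).2), (Finset.mem_filter.mp hu).1⟩
  have := (hp.two_le_card_neighborFinset_filter_mem hc hca hcb).trans (Finset.card_le_card hsub)
  rw [Finset.card_erase_of_mem ((G.mem_neighborFinset c d).mpr hcd),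
    card_neighborFinset_eq_degree] at this
  omega

lemma IsPath.eq_or_eq_of_degree_le_one {a b c : V} {p : G.Walk a b}
    (hp : p.IsPath) (hc : c ∈ p.support) (hdeg : G.degree c ≤ 1) : c = a ∨ c = b := by
  by_contra! h
  have := (hp.two_le_card_neighborFinset_filter_mem hc h.1 h.2).trans (Finset.card_filter_le _ _)
  rw [card_neighborFinset_eq_degree] at this
  omega

end Walk

variable [Fintype V]

noncomputable def lowDegreeEdgeFinset (G : SimpleGraph V) : Finset (Sym2 V) :=
  G.edgeFinset.filter fun e => ∀ x ∈ e, G.degree x ≤ 2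

/-- What a path with vertex set `S` and an end `c` can cover or separate at that end. -/
noncomputable def attachedAt (G : SimpleGraph V) (S : Set V) (c : V) : Finset (V ⊕ Sym2 V) :=
  if G.degree c ≤ 2 then
    (if G.degree c = 1 then {Sum.inl c} else ∅) ∪
      ((G.neighborFinset c).filter (· ∉ S)).image fun d => Sum.inr s(c, d)
  else ∅

lemma card_attachedAt_le (S : Set V) (c : V) :
    (attachedAt G S c).card ≤
      if G.degree c ≤ 2 then
        (if G.degree c = 1 then 1 else 0) + ((G.neighborFinset c).filter (· ∉ S)).card
      else 0 := by
  unfold attachedAt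
  split_ifs
  · exact (Finset.card_union_le _ _).trans
      (Nat.add_le_add (Finset.card_singleton _).le Finset.card_image_le)
  · simpa using Finset.card_image_le
  · simp

lemma card_attachedAt_le_two (S : Set V) (c : V) : (attachedAt G S c).card ≤ 2 := by
  have := (Finset.card_filter_le (G.neighborFinset c) (· ∉ S)).trans_eq
    (G.card_neighborFinset_eq_degree c)
  have := card_attachedAt_le (G := G) S c
  split_ifs at this <;> omega

lemma card_attachedAt_le_one {S : Set V} {c u : V} (hcu : G.Adj c u) (hu : u ∈ S) :
    (attachedAt G S c).card ≤ 1 := by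
  have hsub : (G.neighborFinset c).filter (· ∉ S) ⊆ (G.neighborFinset c).erase u :=
    fun d hd => Finset.mem_erase.mpr
      ⟨fun h => (Finset.mem_filter.mp hd).2 (h ▸ hu), (Finset.mem_filter.mp hd).1⟩
  have := (Finset.card_le_card hsub).trans_eq
    (Finset.card_erase_of_mem ((G.mem_neighborFinset c u).mpr hcu))
  have := card_attachedAt_le (G := G) S c
  rw [card_neighborFinset_eq_degree] at *
  split_ifs at this <;> omega

end SimpleGraph

section SeparatingPaths

variable {G : SimpleGraph V} [Fintype V]

noncomputable def PathIn.endElems (P : PathIn G) : Finset (V ⊕ Sym2 V) :=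
  attachedAt G {x | P.vmem x} P.1 ∪ attachedAt G {x | P.vmem x} P.2.1

lemma PathIn.card_endElems_le (P : PathIn G) : P.endElems.card ≤ 2 := by
  obtain ⟨a, b, p, hp⟩ := P
  set S : Set V := {x | x ∈ p.support}
  change (attachedAt G S a ∪ attachedAt G S b).card ≤ 2
  by_cases hab : a = b
  · subst hab
    rw [Finset.union_self]
    exact card_attachedAt_le_two S a
  have hnil : ¬p.Nil := Walk.not_nil_of_ne hab
  have ha := card_attachedAt_le_one (S := S) (p.adj_snd hnil) (p.getVert_mem_support _)
  have hb := card_attachedAt_le_one (S := S) (p.adj_penultimate hnil).symm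
    (p.getVert_mem_support _)
  have := Finset.card_union_le (attachedAt G S a) (attachedAt G S b)
  omega

lemma PathIn.mem_endElems {P : PathIn G} {c : V} {s : V ⊕ Sym2 V} (hc : c = P.1 ∨ c = P.2.1)
    (hs : s ∈ attachedAt G {x | P.vmem x} c) : s ∈ P.endElems := by
  rw [endElems, Finset.mem_union]
  rcases hc with rfl | rfl
  exacts [Or.inl hs, Or.inr hs]

lemma PathIn.inl_mem_endElems {P : PathIn G} {x : V} (hx : P.vmem x) (hdeg : G.degree x = 1) :
    Sum.inl x ∈ P.endElems :=
  mem_endElems (P.2.2.2.eq_or_eq_of_degree_le_one hx hdeg.le) (by simp [attachedAt, hdeg])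

lemma PathIn.inr_mem_endElems {P : PathIn G} {c d : V} (hc : P.vmem c) (hd : ¬ P.vmem d)
    (hcd : G.Adj c d) (hdeg : G.degree c ≤ 2) : Sum.inr s(c, d) ∈ P.endElems := by
  refine mem_endElems (c := c) ?_ ?_
  · by_contra! h
    exact hd (P.2.2.2.mem_support_of_adj_of_degree_le_two hc h.1 h.2 hdeg hcd)
  · simp only [attachedAt, if_pos hdeg, Finset.mem_union, Finset.mem_image, Finset.mem_filter,
      mem_neighborFinset]
    exact Or.inr ⟨d, ⟨hcd, hd⟩, rfl⟩

lemma leafCount_eq_card_filter :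
    leafCount G = (Finset.univ.filter fun x => G.degree x = 1).card := by
  rw [leafCount, Nat.card_eq_fintype_card, Fintype.card_subtype]
  rfl

theorem leafCount_add_card_lowDegreeEdgeFinset_le {F : Set (PathIn G)} (hF : F.Finite)
    (hsep : VertexSep G F) (hcov : VertexCover G F) :
    leafCount G + (lowDegreeEdgeFinset G).card ≤ 2 * F.ncard := by
  set E := (Finset.univ.filter fun x => G.degree x = 1).disjSum (lowDegreeEdgeFinset G)
  have hE : E ⊆ hF.toFinset.biUnion PathIn.endElems := by
    rintro (x | e) hs <;> simp only [E, Finset.inl_mem_disjSum, Finset.inr_mem_disjSum,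
      Finset.mem_filter, Finset.mem_univ, true_and] at hs <;> rw [Finset.mem_biUnion]
    · obtain ⟨P, hP, hx⟩ := hcov x
      exact ⟨P, hF.mem_toFinset.mpr hP, P.inl_mem_endElems hx hs⟩
    · induction e using Sym2.ind with | h u v => ?_
      obtain ⟨huv, hdeg⟩ := Finset.mem_filter.mp hs
      rw [mem_edgeFinset, mem_edgeSet] at huv
      obtain ⟨P, hP, ⟨hu, hv⟩ | ⟨hu, hv⟩⟩ := hsep u v huv.ne
      · exact ⟨P, hF.mem_toFinset.mpr hP,
          P.inr_mem_endElems hu hv huv (hdeg u (Sym2.mem_mk_left u v))⟩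
      · refine ⟨P, hF.mem_toFinset.mpr hP, Sym2.eq_swap ▸ ?_⟩
        exact P.inr_mem_endElems hv hu huv.symm (hdeg v (Sym2.mem_mk_right u v))
  calc leafCount G + (lowDegreeEdgeFinset G).card = E.card := by
        rw [Finset.card_disjSum, leafCount_eq_card_filter]
    _ ≤ ∑ P ∈ hF.toFinset, P.endElems.card :=
        (Finset.card_le_card hE).trans Finset.card_biUnion_le
    _ ≤ hF.toFinset.card • 2 := Finset.sum_le_card_nsmul _ _ _ fun P _ => P.card_endElems_le
    _ = 2 * F.ncard := by rw [Set.ncard_eq_toFinset_card F hF, smul_eq_mul, mul_comm]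

end SeparatingPaths

lemma Sym2.eq_and_eq_of_mk_eq_mk_of_lt {α : Type*} [LinearOrder α] {a b c d : α}
    (h : s(a, b) = s(c, d)) (hab : a < b) (hcd : c < d) : a = c ∧ b = d :=
  ⟨by simpa [hab.le, hcd.le] using congrArg Sym2.inf h,
    by simpa [hab.le, hcd.le] using congrArg Sym2.sup h⟩

namespace SimpleGraph

variable {G : SimpleGraph V}

lemma IsAcyclic.length_eq_dist (hG : G.IsAcyclic) {u v : V} {p : G.Walk u v} (hp : p.IsPath) :
    p.length = G.dist u v := by
  obtain ⟨q, hq, hlen⟩ := p.reachable.exists_path_of_dist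
  obtain rfl : p = q :=
    congrArg Subtype.val (hG.subsingleton_path u v |>.elim ⟨p, hp⟩ ⟨q, hq⟩)
  exact hlen

lemma IsAcyclic.exists_adj_dist_lt (hG : G.IsAcyclic) {a b v : V} {p : G.Walk a b}
    (hp : p.IsPath) (hv : v ∈ p.support) (hva : v ≠ a) (hvb : v ≠ b) :
    ∃ z ∈ p.support, z ≠ b ∧ G.Adj z v ∧ G.dist a z < G.dist a v := by
  have hnil : ¬(p.takeUntil v hv).Nil := Walk.not_nil_of_ne hva.symm
  have hz : (p.takeUntil v hv).penultimate ∈ (p.takeUntil v hv).support :=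
    Walk.getVert_mem_support _ _
  have hzv := (p.takeUntil v hv).adj_penultimate hnil
  refine ⟨_, p.support_takeUntil_subset_support hv hz,
    fun h => Walk.endpoint_notMem_support_takeUntil hp hv hvb.symm (by rwa [h] at hz), hzv, ?_⟩
  calc _ ≤ ((p.takeUntil v hv).takeUntil _ hz).length := dist_le _
    _ < (p.takeUntil v hv).length := Walk.length_takeUntil_lt_length hz hzv.ne
    _ = G.dist a v := hG.length_eq_dist (hp.takeUntil hv)

lemma IsAcyclic.eq_of_adj_of_mem_support (hG : G.IsAcyclic) {a b a' b' v v' : V}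
    {p : G.Walk a b} {p' : G.Walk a' b'} (hp : p.IsPath) (hp' : p'.IsPath)
    (ha : a = a') (hb : b = b') (hv : v ∈ p.support) (hv' : v' ∈ p'.support)
    (hav : G.Adj a v) (hav' : G.Adj a' v') : v = v' := by
  subst ha hb
  obtain rfl : p = p' :=
    congrArg Subtype.val (hG.subsingleton_path a b |>.elim ⟨p, hp⟩ ⟨p', hp'⟩)
  rw [hG.eq_snd_of_adj_start hp hav hv, hG.eq_snd_of_adj_start hp hav' hv']

variable [Fintype V]

lemma IsAcyclic.exists_adj_notMem_support (hG : G.IsAcyclic) {x y : V} {p : G.Walk x y}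
    (hp : p.IsPath) (hx : 2 ≤ G.degree x) : ∃ x', G.Adj x x' ∧ x' ∉ p.support := by
  obtain ⟨u, hu, u', hu', hne⟩ := Finset.one_lt_card.mp
    (show 1 < (G.neighborFinset x).card by rw [card_neighborFinset_eq_degree]; omega)
  rw [mem_neighborFinset] at hu hu'
  by_contra! h
  exact hne ((hG.eq_snd_of_adj_start hp hu (h u hu)).trans
    (hG.eq_snd_of_adj_start hp hu' (h u' hu')).symm)

namespace Walk

structure IsBare {x y : V} (w : G.Walk x y) : Prop where
  isPath : w.IsPath
  degree_eq_two : ∀ z ∈ w.support, z ≠ x → z ≠ y → G.degree z = 2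
  degree_start_ne_two : G.degree x ≠ 2
  degree_end_ne_two : G.degree y ≠ 2

lemma IsBare.reverse {x y : V} {w : G.Walk x y} (hw : w.IsBare) : w.reverse.IsBare where
  isPath := hw.isPath.reverse
  degree_eq_two z hz hzy hzx := hw.degree_eq_two z (by simpa using hz) hzx hzy
  degree_start_ne_two := hw.degree_end_ne_two
  degree_end_ne_two := hw.degree_start_ne_two

lemma IsBare.start_ne_end {x y v : V} {w : G.Walk x y} (hw : w.IsBare) (hv : v ∈ w.support)
    (hv2 : G.degree v = 2) : x ≠ y := by
  rintro rfl
  rw [(isPath_iff_nil.mp hw.isPath).eq_nil, support_nil, List.mem_singleton] at hv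
  exact hw.degree_start_ne_two (hv ▸ hv2)

lemma IsPath.end_mem_of_closed {S : Set V}
    (hS : ∀ z ∈ S, G.degree z = 2 → ∀ y, G.Adj z y → y ∈ S) {u x : V} {q : G.Walk u x}
    (hq : q.IsPath) (hu : u ∈ S) (hdeg : ∀ z ∈ q.support, z ≠ x → G.degree z = 2) :
    x ∈ S := by
  induction q with
  | nil => exact hu
  | cons h q ih =>
    rw [cons_isPath_iff] at hq
    refine ih hq.1 (hS _ hu (hdeg _ (start_mem_support _) ?_) _ h)
      (fun z hz hzx => hdeg z (by simp [hz]) hzx)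
    rintro rfl
    exact hq.2 (end_mem_support q)

lemma IsBare.start_mem_support {a b a' b' v : V} {w : G.Walk a b} {w' : G.Walk a' b'}
    (hw : w.IsBare) (hw' : w'.IsBare) (hv : v ∈ w.support) (hv' : v ∈ w'.support)
    (hv2 : G.degree v = 2) : a' ∈ w.support := by
  refine (hw'.isPath.takeUntil hv').reverse.end_mem_of_closed (S := {z | z ∈ w.support})
    (fun z hz hz2 y hzy => hw.isPath.mem_support_of_adj_of_degree_le_two hz ?_ ?_ hz2.le hzy)
    hv ?_
  · rintro rfl
    exact hw.degree_start_ne_two hz2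
  · rintro rfl
    exact hw.degree_end_ne_two hz2
  · intro z hz hza'
    rw [support_reverse, List.mem_reverse] at hz
    refine hw'.degree_eq_two z (w'.support_takeUntil_subset_support hv' hz) hza' ?_
    rintro rfl
    exact endpoint_notMem_support_takeUntil hw'.isPath hv'
      (fun h => hw'.degree_end_ne_two (h ▸ hv2)) hz

lemma IsBare.mk_eq_mk {a b a' b' v : V} {w : G.Walk a b} {w' : G.Walk a' b'}
    (hw : w.IsBare) (hw' : w'.IsBare) (hv : v ∈ w.support) (hv' : v ∈ w'.support)
    (hv2 : G.degree v = 2) : s(a, b) = s(a', b') := by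
  have ha' := hw.start_mem_support hw' hv hv' hv2
  have hb' := hw.start_mem_support hw'.reverse hv (by simpa using hv') hv2
  have hends : ∀ z ∈ w.support, G.degree z ≠ 2 → z = a ∨ z = b := fun z hz hz2 => by
    by_contra! h
    exact hz2 (hw.degree_eq_two z hz h.1 h.2)
  have hne := hw'.start_ne_end hv' hv2
  rcases hends a' ha' hw'.degree_start_ne_two with rfl | rfl <;>
    rcases hends b' hb' hw'.degree_end_ne_two with rfl | rfl
  all_goals first | exact absurd rfl hne | rfl | exact Sym2.eq_swap

end Walk

lemma IsAcyclic.exists_extend_start (hG : G.IsAcyclic) (n : ℕ) {x y : V} (p : G.Walk x y)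
    (hp : p.IsPath) (hint : ∀ z ∈ p.support, z ≠ x → z ≠ y → G.degree z = 2)
    (hn : Fintype.card V ≤ p.length + n) :
    ∃ (x' : V) (p' : G.Walk x' y), p'.IsPath ∧
      (∀ z ∈ p'.support, z ≠ x' → z ≠ y → G.degree z = 2) ∧
      G.degree x' ≠ 2 ∧ p.support ⊆ p'.support := by
  induction n generalizing x p with
  | zero => exact absurd hp.length_lt (by omega)
  | succ n ih =>
    by_cases hx : G.degree x = 2
    · obtain ⟨x', hxx', hx'⟩ := hG.exists_adj_notMem_support hp hx.ge
      obtain ⟨x'', p', hp', hint', hx'', hsub⟩ := ih (Walk.cons hxx'.symm p) (hp.cons hx')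
        (fun z hz hzx' hzy => by
          rcases List.mem_cons.mp hz with rfl | hz
          · exact absurd rfl hzx'
          by_cases hzx : z = x
          · exact hzx ▸ hx
          · exact hint z hz hzx hzy)
        (by simp only [Walk.length_cons]; omega)
      exact ⟨x'', p', hp', hint', hx'', fun z hz => hsub (List.mem_cons_of_mem _ hz)⟩
    · exact ⟨x, p, hp, hint, hx, fun _ => id⟩

lemma IsAcyclic.exists_isBare (hG : G.IsAcyclic) (v : V) :
    ∃ (a b : V) (w : G.Walk a b), w.IsBare ∧ v ∈ w.support := by
  obtain ⟨x, p, hp, hint, hx, hsub⟩ := hG.exists_extend_start (Fintype.card V)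
    (Walk.nil : G.Walk v v) .nil (by simp) (by simp)
  obtain ⟨y, q, hq, hint', hy, hsub'⟩ := hG.exists_extend_start (Fintype.card V) p.reverse
    hp.reverse (fun z hz hzv hzx => hint z (by simpa using hz) hzx hzv) (by simp)
  exact ⟨y, x, q, ⟨hq, hint', hy, hx⟩, hsub' (by simp [hsub (Walk.start_mem_support _)])⟩

section BareCharge

variable [LinearOrder V]

structure IsBareStep {a b : V} (w : G.Walk a b) (z v : V) : Prop where
  isBare : w.IsBare
  lt : a < b
  mem : v ∈ w.support
  pred_mem : z ∈ w.support
  pred_ne : z ≠ b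
  adj : G.Adj z v
  dist_lt : G.dist a z < G.dist a v

lemma IsAcyclic.exists_isBareStep (hG : G.IsAcyclic) {v : V} (hv : G.degree v = 2) :
    ∃ (a b z : V) (w : G.Walk a b), IsBareStep w z v := by
  obtain ⟨a, b, w, hw, hvw⟩ := hG.exists_isBare v
  wlog hab : a < b generalizing a b
  · exact this b a w.reverse hw.reverse (by simpa using hvw)
      ((lt_or_gt_of_ne (hw.start_ne_end hvw hv)).resolve_left hab)
  obtain ⟨z, hz, hzb, hzv, hdist⟩ := hG.exists_adj_dist_lt hw.isPath hvw
    (fun h => hw.degree_start_ne_two (h ▸ hv)) (fun h => hw.degree_end_ne_two (h ▸ hv))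
  exact ⟨a, b, z, w, hw, hab, hvw, hz, hzb, hzv, hdist⟩

variable (G) in
noncomputable def bareCharge (a b z v : V) : Sym2 V ⊕ Sym2 V :=
  if z = a ∧ G.degree a ≠ 1 then .inr s(a, b) else .inl s(v, z)

lemma IsBareStep.bareCharge_mem (hleaf : ∀ x y, G.degree x = 1 → G.degree y ≠ 1 → x < y)
    {a b z v : V} {w : G.Walk a b} (h : IsBareStep w z v) (hv : G.degree v = 2) :
    bareCharge G a b z v ∈ (lowDegreeEdgeFinset G).disjSum (bareNoLeafSet G).toFinset := by
  have hva : v ≠ a := fun h' => h.isBare.degree_start_ne_two (h' ▸ hv)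
  have hvb : v ≠ b := fun h' => h.isBare.degree_end_ne_two (h' ▸ hv)
  by_cases hza : z = a ∧ G.degree a ≠ 1
  · simp only [bareCharge, if_pos hza, Finset.inr_mem_disjSum, Set.mem_toFinset]
    exact ⟨a, b, w, rfl, h.isBare.isPath, Walk.two_le_length_of_mem_support h.mem hva hvb,
      h.isBare.degree_eq_two, hza.2, h.isBare.degree_start_ne_two,
      fun hb => h.lt.not_gt (hleaf b a hb hza.2), h.isBare.degree_end_ne_two⟩
  · simp only [bareCharge, if_neg hza, Finset.inl_mem_disjSum, lowDegreeEdgeFinset,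
      Finset.mem_filter, mem_edgeFinset, mem_edgeSet, Sym2.mem_iff, forall_eq_or_imp, forall_eq]
    refine ⟨h.adj.symm, hv.le, ?_⟩
    by_cases hz : z = a
    · rw [hz]
      have : G.degree a = 1 := by_contra fun h1 => hza ⟨hz, h1⟩
      omega
    · exact (h.isBare.degree_eq_two z h.pred_mem hz h.pred_ne).le

lemma IsBareStep.eq_of_bareCharge_eq (hG : G.IsAcyclic) {a b z v a' b' z' v' : V}
    {w : G.Walk a b} {w' : G.Walk a' b'} (h : IsBareStep w z v) (h' : IsBareStep w' z' v')
    (hv' : G.degree v' = 2) (heq : bareCharge G a b z v = bareCharge G a' b' z' v') : v = v' := by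
  unfold bareCharge at heq
  by_cases hza : z = a ∧ G.degree a ≠ 1 <;> by_cases hza' : z' = a' ∧ G.degree a' ≠ 1
  · rw [if_pos hza, if_pos hza', Sum.inr.injEq] at heq
    obtain ⟨ha, hb⟩ := Sym2.eq_and_eq_of_mk_eq_mk_of_lt heq h.lt h'.lt
    exact hG.eq_of_adj_of_mem_support h.isBare.isPath h'.isBare.isPath ha hb h.mem h'.mem
      (hza.1 ▸ h.adj) (hza'.1 ▸ h'.adj)
  · rw [if_pos hza, if_neg hza'] at heq
    cases heq
  · rw [if_neg hza, if_pos hza'] at heq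
    cases heq
  · rw [if_neg hza, if_neg hza', Sum.inl.injEq] at heq
    rcases Sym2.eq_iff.mp heq with ⟨hvv, -⟩ | ⟨rfl, rfl⟩
    · exact hvv
    -- `v` and `v'` are each other's predecessor on the same bare path, so each is closer to
    -- the common end `a` than the other.
    have ha := (Sym2.eq_and_eq_of_mk_eq_mk_of_lt
      (h.isBare.mk_eq_mk h'.isBare h.pred_mem h'.mem hv') h.lt h'.lt).1
    have := h.dist_lt
    have := h'.dist_lt
    rw [ha] at *
    omega

end BareCharge

end SimpleGraph

theorem deg2Count_le_card_lowDegreeEdgeFinset_add [Fintype V] [LinearOrder V]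
    {G : SimpleGraph V} (hT : G.IsTree)
    (hleaf : ∀ x y, G.degree x = 1 → G.degree y ≠ 1 → x < y) :
    deg2Count G ≤ (lowDegreeEdgeFinset G).card + (bareNoLeafSet G).ncard := by
  choose a b z w h using fun v : {x : V | G.degree x = 2} => hT.isAcyclic.exists_isBareStep v.2
  calc deg2Count G = Nat.card {x : V | G.degree x = 2} := rfl
    _ ≤ Nat.card ((lowDegreeEdgeFinset G).disjSum (bareNoLeafSet G).toFinset) :=
        Nat.card_le_card_of_injective (fun v => ⟨_, (h v).bareCharge_mem hleaf v.2⟩)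
          fun v v' hvv' => Subtype.ext <|
            (h v).eq_of_bareCharge_eq hT.isAcyclic (h v') v'.2 (congrArg Subtype.val hvv')
    _ = (lowDegreeEdgeFinset G).card + (bareNoLeafSet G).ncard := by
        rw [Nat.card_eq_fintype_card, Fintype.card_coe, Finset.card_disjSum,
          Set.ncard_eq_toFinset_card']

theorem stmt14 [Fintype V] (G : SimpleGraph V) (hT : G.IsTree)
    (F : Set (PathIn G)) (hF : F.Finite)
    (hsep : VertexSep G F) (hcov : VertexCover G F) :
    leafCount G + (deg2Count G - (bareNoLeafSet G).ncard) ≤ 2 * F.ncard := by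
  let _ : LinearOrder V := LinearOrder.lift'
    (fun v => toLex (decide (G.degree v ≠ 1), Fintype.equivFin V v))
    fun v v' h => (Fintype.equivFin V).injective (congrArg (·.2) h)
  have hleaves := leafCount_add_card_lowDegreeEdgeFinset_le hF hsep hcov
  have hdeg2 := deg2Count_le_card_lowDegreeEdgeFinset_add hT fun x y hx hy => by
    change toLex (decide (G.degree x ≠ 1), Fintype.equivFin V x) <
      toLex (decide (G.degree y ≠ 1), Fintype.equivFin V y)
    simp [Prod.Lex.toLex_lt_toLex, hx, hy]
  omega
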